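/- In the case of the rooted binary tree (d = 2), the normalizer of the group SHAut({0,1}*) of spherically homogeneous automorphisms in Aut({0,1}*) is exactly the group Aff({0,1}*) of affine automorphisms. -/

import Mathlib

/-- `A` is an infinite upper triangular matrix over `ℤ/dℤ` with units on the diagonal,
i.e. `A ∈ U_∞ℤ_d`. -/
def IsUT (d : ℕ) (A : ℕ → ℕ → ZMod d) : Prop :=
  (∀ i j, j < i → A i j = 0) ∧ (∀ i, IsUnit (A i i))

/-- The affine transformation `π_{A,b} : ℤ_d^∞ → ℤ_d^∞`, `x ↦ b + x·A`. -/
def affMap (d : ℕ) (A : ℕ → ℕ → ZMod d) (b : ℕ → ZMod d)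
    (x : ℕ → ZMod d) : ℕ → ZMod d :=
  fun j => b j + ∑ i ∈ Finset.range (j + 1), x i * A i j

/-- `g` preserves agreement of initial segments: if two sequences agree in their first
`n` entries, then so do their images, for every `n`. -/
def Pres (d : ℕ) (g : (ℕ → ZMod d) → ℕ → ZMod d) : Prop :=
  ∀ (n : ℕ) (x y : ℕ → ZMod d), (∀ i < n, x i = y i) → ∀ i < n, g x i = g y i

/-- `SHAut({0,1}*)`: the set of spherically homogeneous automorphisms of the binary
tree, i.e. permutations of the boundary acting coordinatewise by a sequence of
permutations of `ℤ/2ℤ`. -/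
def SHSet : Set (Equiv.Perm (ℕ → ZMod 2)) :=
  {e | ∃ s : ℕ → Equiv.Perm (ZMod 2), ∀ x n, e x n = s n (x n)}

/-!
Over `ℤ/2ℤ` every permutation of the alphabet is a translation, so `SHAut({0,1}*)` is the
group of translations `x ↦ x + c` of `ℤ_2^∞`. A permutation `g` normalizes the translations
exactly when `x ↦ g x - g 0` is additive. Such an additive map which preserves initial segments
is given by an upper triangular matrix, since its `j`-th output only sees `x_0, …, x_j`; the
diagonal entries are nonzero because `g⁻¹` preserves initial segments as well.
-/

open Finset

section Translations

variable {G : Type*} [AddCommGroup G]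

lemma conj_addRight_of_map_add {g : Equiv.Perm G} (hg : ∀ x y, g (x + y) = g x + g y - g 0)
    (c : G) : g⁻¹ * Equiv.addRight c * g = Equiv.addRight (g.symm (c + g 0)) := by
  ext x
  simp only [Equiv.Perm.mul_apply, Equiv.Perm.inv_def, Equiv.coe_addRight]
  rw [Equiv.symm_apply_eq, hg, Equiv.apply_symm_apply, add_sub_assoc, add_sub_cancel_right]

theorem image_conj_range_addRight_iff (g : Equiv.Perm G) :
    (fun f => g⁻¹ * f * g) '' Set.range Equiv.addRight = Set.range Equiv.addRight ↔
      ∀ x y, g (x + y) = g x + g y - g 0 := by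
  constructor
  · intro h x y
    obtain ⟨_, ⟨c, rfl⟩, hc⟩ : Equiv.addRight y ∈ (fun f => g⁻¹ * f * g) '' Set.range _ := by
      rw [h]; exact ⟨y, rfl⟩
    have hshift : ∀ x, g (x + y) = g x + c := fun x => by
      have := congr($hc x)
      simp only [Equiv.Perm.mul_apply, Equiv.Perm.inv_def, Equiv.coe_addRight,
        Equiv.symm_apply_eq] at this
      exact this.symm
    have hc0 : c = g y - g 0 := by rw [← zero_add y, hshift, add_sub_cancel_left]
    rw [hshift, hc0, add_sub_assoc]
  · intro hg
    rw [← Set.range_comp]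
    have hconj : (fun f => g⁻¹ * f * g) ∘ Equiv.addRight =
        Equiv.addRight ∘ fun c => g.symm (c + g 0) :=
      funext (conj_addRight_of_map_add hg)
    rw [hconj]
    exact ((Equiv.addRight (g 0)).trans g.symm).surjective.range_comp _

end Translations

lemma Equiv.Perm.zmod_two_apply (s : Equiv.Perm (ZMod 2)) (a : ZMod 2) : s a = a + s 0 := by
  revert s a; decide

lemma SHSet_eq_range_addRight : SHSet = Set.range Equiv.addRight := by
  ext e
  constructor
  · rintro ⟨s, hs⟩
    exact ⟨fun n => s n 0, Equiv.ext fun x => funext fun n =>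
      ((hs x n).trans ((s n).zmod_two_apply (x n))).symm⟩
  · rintro ⟨c, rfl⟩
    exact ⟨fun n => Equiv.addRight (c n), fun _ _ => rfl⟩

section Causal

variable {d : ℕ}

lemma affMap_zero (A : ℕ → ℕ → ZMod d) (b : ℕ → ZMod d) : affMap d A b 0 = b := by
  ext j
  simp [affMap]

lemma affMap_add (A : ℕ → ℕ → ZMod d) (b x y : ℕ → ZMod d) :
    affMap d A b (x + y) = affMap d A b x + affMap d A b y - b := by
  ext j
  simp only [affMap, Pi.add_apply, Pi.sub_apply, add_mul, sum_add_distrib]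
  abel

namespace Pres

variable {g : (ℕ → ZMod d) → ℕ → ZMod d}

lemma apply_single_of_lt (hg : Pres d g) {i j : ℕ} (hji : j < i) (a : ZMod d) :
    g (Pi.single i a) j = g 0 j :=
  hg i _ 0 (fun k hk => by simp [hk.ne]) j hji

lemma apply_single_self_ne {e : Equiv.Perm (ℕ → ZMod d)} (he : Pres d e)
    (he' : Pres d e.symm) (i : ℕ) {a : ZMod d} (ha : a ≠ 0) :
    e (Pi.single i a) i ≠ e 0 i := by
  intro hii
  have hagree : ∀ j < i + 1, e (Pi.single i a) j = e 0 j := fun j hj => by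
    rcases Nat.lt_succ_iff_lt_or_eq.mp hj with hji | rfl
    · exact he.apply_single_of_lt hji a
    · exact hii
  simpa [ha] using he' (i + 1) _ _ hagree i i.lt_succ_self

lemma apply_eq_sum (hg : Pres d g) (hadd : ∀ x y, g (x + y) = g x + g y - g 0)
    (x : ℕ → ZMod d) (j : ℕ) :
    g x j = g 0 j + ∑ i ∈ range (j + 1), x i * (g (Pi.single i 1) j - g 0 j) := by
  let L := AddMonoidHom.mk' (fun x => g x - g 0) (fun x y => by rw [hadd]; abel)
  have htrunc : g x j = g (∑ i ∈ range (j + 1), Pi.single i (x i)) j :=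
    hg (j + 1) _ _ (fun k hk => by simp [sum_pi_single, mem_range.mpr hk]) j j.lt_succ_self
  have hsingle : ∀ i, L (Pi.single i (x i)) = x i • L (Pi.single i 1) := fun i => by
    rw [← ZMod.map_smul, ← Pi.single_smul', smul_eq_mul, mul_one]
  have hL : L (∑ i ∈ range (j + 1), Pi.single i (x i)) j =
      ∑ i ∈ range (j + 1), x i * (g (Pi.single i 1) j - g 0 j) := by
    simp only [map_sum, hsingle, Finset.sum_apply, Pi.smul_apply, smul_eq_mul]
    rfl
  rw [htrunc, ← hL]
  exact (add_sub_cancel (g 0 j) _).symm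

end Pres

theorem exists_isUT_of_pres {p : ℕ} [Fact p.Prime] (g : Equiv.Perm (ℕ → ZMod p))
    (hg : Pres p g) (hg' : Pres p g.symm) (hadd : ∀ x y, g (x + y) = g x + g y - g 0) :
    ∃ A b, IsUT p A ∧ ∀ x, g x = affMap p A b x := by
  refine ⟨fun i j => g (Pi.single i 1) j - g 0 j, g 0, ⟨fun i j hji => ?_, fun i => ?_⟩,
    fun x => funext (hg.apply_eq_sum hadd x)⟩
  · exact sub_eq_zero.mpr (hg.apply_single_of_lt hji 1)
  · exact isUnit_iff_ne_zero.mpr (sub_ne_zero.mpr (hg.apply_single_self_ne hg' i one_ne_zero))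

end Causal

/-- For the rooted binary tree, the normalizer of `SHAut({0,1}*)` in `Aut({0,1}*)` is
exactly the group `Aff({0,1}*)` of affine automorphisms: an automorphism `g` satisfies
`g⁻¹ SHAut g = SHAut` if and only if `g = π_{A,b}` for some `A ∈ U_∞ℤ_2`, `b ∈ ℤ_2^∞`. -/
theorem stmt_14 (g : Equiv.Perm (ℕ → ZMod 2))
    (hg : Pres 2 g) (hg' : Pres 2 g.symm) :
    (fun f => g⁻¹ * f * g) '' SHSet = SHSet ↔
      ∃ A b, IsUT 2 A ∧ ∀ x, g x = affMap 2 A b x := by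
  rw [SHSet_eq_range_addRight, image_conj_range_addRight_iff]
  refine ⟨exists_isUT_of_pres g hg hg', ?_⟩
  rintro ⟨A, b, -, hgA⟩
  rw [show ⇑g = affMap 2 A b from funext hgA, affMap_zero]
  exact affMap_add A b
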